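/- arXiv:1404.2698 — 5 statements merged into one kernel-verified Lean document; each statement's English description precedes it below -/
import Mathlib

section
/- For every two-qubit unitary U, the KC number of its adjoint equals its own KC number: #KC(U†) = #KC(U). -/
open Matrix Kronecker Complex

noncomputable section

/-- 2×2 complex matrices (one qubit operators). -/
abbrev M2 := Matrix (Fin 2) (Fin 2) ℂ
/-- 4×4 complex matrices indexed by `(Fin 2) × (Fin 2)` (two-qubit operators). -/
abbrev M4 := Matrix (Fin 2 × Fin 2) (Fin 2 × Fin 2) ℂ

/-- Pauli X. -/
def PX : M2 := !![0, 1; 1, 0]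
/-- Pauli Y. -/
def PY : M2 := !![0, -Complex.I; Complex.I, 0]
/-- Pauli Z. -/
def PZ : M2 := !![1, 0; 0, -1]

def IsUnitary2 (a : M2) : Prop := a ∈ Matrix.unitaryGroup (Fin 2) ℂ
def IsUnitary4 (U : M4) : Prop := U ∈ Matrix.unitaryGroup (Fin 2 × Fin 2) ℂ

/-- The global part `exp(i(αx X⊗X + αy Y⊗Y + αz Z⊗Z))` of a Kraus–Cirac decomposition. -/
def KCcore (ax ay az : ℝ) : M4 :=
  NormedSpace.exp (Complex.I •
    ((ax : ℂ) • (PX ⊗ₖ PX) + (ay : ℂ) • (PY ⊗ₖ PY) + (az : ℂ) • (PZ ⊗ₖ PZ)))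

/-- The number of nonzero coefficients among `(αx, αy, αz)`. -/
def nnz (ax ay az : ℝ) : ℕ :=
  (if ax = 0 then 0 else 1) + (if ay = 0 then 0 else 1) + (if az = 0 then 0 else 1)

/-- The Kraus–Cirac number `#KC(U)`: the minimum number of nonzero KC coefficients over
all Kraus–Cirac decompositions of `U`. -/
def KCnum (U : M4) : ℕ :=
  sInf { n | ∃ uA uB vA vB : M2, ∃ ax ay az : ℝ,
    IsUnitary2 uA ∧ IsUnitary2 uB ∧ IsUnitary2 vA ∧ IsUnitary2 vB ∧
    U = (uA ⊗ₖ uB) * KCcore ax ay az * (vA ⊗ₖ vB) ∧ n = nnz ax ay az }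

def E00 : M2 := !![1, 0; 0, 0]
def E11 : M2 := !![0, 0; 0, 1]

/-- Controlled-unitaries up to local unitaries. -/
def Uc : Set M4 := { U | ∃ a b c d w : M2,
  IsUnitary2 a ∧ IsUnitary2 b ∧ IsUnitary2 c ∧ IsUnitary2 d ∧ IsUnitary2 w ∧
  U = (a ⊗ₖ b) * (E00 ⊗ₖ (1 : M2) + E11 ⊗ₖ w) * (c ⊗ₖ d) }

/-- Partial trace over the second qubit. -/
def ptraceB (M : M4) : M2 := Matrix.of fun i j => ∑ k : Fin 2, M (i, k) (j, k)

/-- The controlled-phase gate `diag(1,1,1,e^{iθ})`. -/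
def Cp (θ : ℝ) : M4 :=
  Matrix.diagonal fun p => if p = ((1 : Fin 2), (1 : Fin 2)) then Complex.exp (Complex.I * θ) else 1

lemma Matrix.IsHermitian.kronecker {R m n : Type*} [CommSemiring R] [StarRing R]
    {A : Matrix m m R} {B : Matrix n n R} (hA : A.IsHermitian) (hB : B.IsHermitian) :
    (A ⊗ₖ B).IsHermitian := by
  rw [IsHermitian, conjTranspose_kronecker, hA.eq, hB.eq]

lemma isHermitian_PX : PX.IsHermitian := by
  ext i j; fin_cases i <;> fin_cases j <;> simp [PX]

lemma isHermitian_PY : PY.IsHermitian := by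
  ext i j; fin_cases i <;> fin_cases j <;> simp [PY]

lemma isHermitian_PZ : PZ.IsHermitian := by
  ext i j; fin_cases i <;> fin_cases j <;> simp [PZ]

/-- `exp(iH)ᴴ = exp(-iH)` for the Hermitian generator `H`. -/
lemma KCcore_conjTranspose (ax ay az : ℝ) :
    (KCcore ax ay az)ᴴ = KCcore (-ax) (-ay) (-az) := by
  rw [KCcore, KCcore, ← Matrix.exp_conjTranspose]
  congr 1
  simp only [conjTranspose_smul, conjTranspose_add,
    (isHermitian_PX.kronecker isHermitian_PX).eq, (isHermitian_PY.kronecker isHermitian_PY).eq,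
    (isHermitian_PZ.kronecker isHermitian_PZ).eq, star_def, Complex.conj_I,
    Complex.conj_ofReal, Complex.ofReal_neg, neg_smul]
  module

lemma conjTranspose_KCdecomp (uA uB vA vB : M2) (ax ay az : ℝ) :
    ((uA ⊗ₖ uB) * KCcore ax ay az * (vA ⊗ₖ vB))ᴴ =
      (vAᴴ ⊗ₖ vBᴴ) * KCcore (-ax) (-ay) (-az) * (uAᴴ ⊗ₖ uBᴴ) := by
  rw [conjTranspose_mul, conjTranspose_mul, conjTranspose_kronecker, conjTranspose_kronecker,
    KCcore_conjTranspose, mul_assoc]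

lemma nnz_neg (ax ay az : ℝ) : nnz (-ax) (-ay) (-az) = nnz ax ay az := by
  simp only [nnz, neg_eq_zero]

lemma KCcounts_subset_conjTranspose (U : M4) :
    { n | ∃ uA uB vA vB : M2, ∃ ax ay az : ℝ,
      IsUnitary2 uA ∧ IsUnitary2 uB ∧ IsUnitary2 vA ∧ IsUnitary2 vB ∧
      U = (uA ⊗ₖ uB) * KCcore ax ay az * (vA ⊗ₖ vB) ∧ n = nnz ax ay az } ⊆
    { n | ∃ uA uB vA vB : M2, ∃ ax ay az : ℝ,
      IsUnitary2 uA ∧ IsUnitary2 uB ∧ IsUnitary2 vA ∧ IsUnitary2 vB ∧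
      Uᴴ = (uA ⊗ₖ uB) * KCcore ax ay az * (vA ⊗ₖ vB) ∧ n = nnz ax ay az } := by
  rintro n ⟨uA, uB, vA, vB, ax, ay, az, huA, huB, hvA, hvB, rfl, rfl⟩
  exact ⟨vAᴴ, vBᴴ, uAᴴ, uBᴴ, -ax, -ay, -az, Unitary.star_mem hvA, Unitary.star_mem hvB,
    Unitary.star_mem huA, Unitary.star_mem huB, conjTranspose_KCdecomp .., (nnz_neg ..).symm⟩

theorem stmt2_general (U : M4) : KCnum Uᴴ = KCnum U := by
  unfold KCnum
  congr 1
  refine (KCcounts_subset_conjTranspose U).antisymm' ?_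
  simpa only [conjTranspose_conjTranspose] using KCcounts_subset_conjTranspose Uᴴ

/-- the KC number of the adjoint equals the KC number. -/
theorem stmt2 (U : M4) (hU : IsUnitary4 U) : KCnum Uᴴ = KCnum U :=
  stmt2_general U

end
end

section
/- Every two-qubit unitary is a product of three controlled-unitaries up to local unitaries: for every unitary W ∈ M₄(ℂ) there exist U, V, X ∈ U_c with W = U·V·X. -/
/-!
Cosine–sine decomposition. Viewed as a 2 × 2 matrix of 2 × 2 blocks (block indices = first
qubit), every unitary `W` factors as `diag(P₀, P₁) · [[S, -T], [T, S]] · diag(Q₀, Q₁)` with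
`Pᵢ, Qᵢ` unitary and `S, T` real diagonal with `S² + T² = 1`. The two outer factors are
controlled-unitaries. The middle one is a rotation of the first qubit controlled by the second;
since all real rotations `[[c, -d], [d, c]]` are diagonalised by the same unitary `u`, conjugating
by `u ⊗ 1` turns it into `diag(S + iT, S - iT)`, again a controlled-unitary.
-/

open Matrix Kronecker Complex

noncomputable section

namespace Matrix

variable {n : Type*} [Fintype n] [DecidableEq n] {𝕜 : Type*} [RCLike 𝕜]

theorem star_fin_two {α : Type*} [Star α] (a b c d : α) :
    star !![a, b; c, d] = !![star a, star c; star b, star d] := by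
  ext i j
  fin_cases i <;> fin_cases j <;> rfl

theorem diagonal_mem_unitary {m R : Type*} [Fintype m] [DecidableEq m] [Ring R] [StarRing R]
    {d : m → R} (h : ∀ i, d i ∈ unitary R) : diagonal d ∈ unitary (Matrix m m R) := by
  rw [Unitary.mem_iff, star_eq_conjTranspose, diagonal_conjTranspose, diagonal_mul_diagonal,
    diagonal_mul_diagonal, ← diagonal_one]
  exact ⟨congrArg diagonal (funext fun i => Unitary.star_mul_self_of_mem (h i)),
    congrArg diagonal (funext fun i => Unitary.mul_star_self_of_mem (h i))⟩

theorem comp_symm_mem_unitary {I J R : Type*} [Fintype I] [Fintype J] [DecidableEq I]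
    [DecidableEq J] [CommRing R] [StarRing R] {W : Matrix (I × J) (I × J) R}
    (hW : W ∈ unitary _) : (comp I I J J R).symm W ∈ unitary (Matrix I I (Matrix J J R)) := by
  have hstar : star ((comp I I J J R).symm W) = (compRingEquiv I J R).symm (star W) := rfl
  rw [Unitary.mem_iff, hstar, ← compRingEquiv_symm_apply, ← map_mul, ← map_mul,
    Unitary.star_mul_self_of_mem hW, Unitary.mul_star_self_of_mem hW, map_one, and_self]

/-- The unitary factor completes the normalised nonzero columns of `M` to an orthonormal basis. -/
theorem exists_mem_unitaryGroup_eq_mul_diagonal_of_isDiag {M : Matrix n n 𝕜}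
    (h : (Mᴴ * M).IsDiag) :
    ∃ P ∈ unitaryGroup n 𝕜, ∃ s : n → ℝ, (∀ j, (s j : 𝕜) ^ 2 = (Mᴴ * M) j j) ∧
      M = P * diagonal (fun j => (s j : 𝕜)) := by
  set col : n → EuclideanSpace 𝕜 n := fun j => WithLp.toLp 2 (fun i => M i j)
  have hinner (i j : n) : inner 𝕜 (col i) (col j) = (Mᴴ * M) i j := by
    simp [col, EuclideanSpace.inner_eq_star_dotProduct, Matrix.mul_apply, dotProduct, mul_comm]
  set v : n → EuclideanSpace 𝕜 n := fun j => (‖col j‖⁻¹ : 𝕜) • col j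
  have hv : Orthonormal 𝕜 ({j | col j ≠ 0}.domRestrict v) := by
    rw [orthonormal_iff_ite]
    rintro ⟨i, hi⟩ ⟨j, hj⟩
    simp only [Set.domRestrict_apply, v, inner_smul_left, inner_smul_right, Subtype.mk.injEq]
    split_ifs with hij
    · subst hij
      have hc : (‖col i‖ : 𝕜) ≠ 0 := by simpa using hi
      rw [inner_self_eq_norm_sq_to_K, ← RCLike.ofReal_inv, RCLike.conj_ofReal, RCLike.ofReal_inv]
      field_simp
    · rw [hinner, h hij, mul_zero, mul_zero]
  obtain ⟨b, hb⟩ := hv.exists_orthonormalBasis_extension_of_card_eq finrank_euclideanSpace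
  have hcol (j : n) : col j = (‖col j‖ : 𝕜) • b j := by
    by_cases hj : col j = 0
    · simp [hj]
    · rw [hb j hj, smul_smul, mul_inv_cancel₀ (by simpa using hj), one_smul]
  refine ⟨(EuclideanSpace.basisFun n 𝕜).toBasis.toMatrix b,
    (EuclideanSpace.basisFun n 𝕜).toMatrix_orthonormalBasis_mem_unitary b, fun j => ‖col j‖, ?_, ?_⟩
  · intro j
    rw [← hinner, inner_self_eq_norm_sq_to_K]
  · ext i j
    rw [show M i j = col j i from rfl, hcol j]
    simp [Matrix.mul_apply, diagonal_apply, Module.Basis.toMatrix_apply, mul_comm,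
      RCLike.real_smul_eq_coe_mul]

/-- Simultaneous singular value decomposition of the two blocks of an isometric block column:
`Q` diagonalises `Aᴴ A`, hence also `Cᴴ C = 1 - Aᴴ A`. -/
theorem exists_cosSin_of_conjTranspose_mul_self_add_eq_one {A C : Matrix n n 𝕜}
    (h : Aᴴ * A + Cᴴ * C = 1) :
    ∃ P₀ ∈ unitaryGroup n 𝕜, ∃ P₁ ∈ unitaryGroup n 𝕜, ∃ Q ∈ unitaryGroup n 𝕜, ∃ s t : n → ℝ,
      (∀ k, s k ^ 2 + t k ^ 2 = 1) ∧
      A = P₀ * diagonal (fun k => (s k : 𝕜)) * Qᴴ ∧ C = P₁ * diagonal (fun k => (t k : 𝕜)) * Qᴴ := by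
  have hH := isHermitian_conjTranspose_mul_self A
  set Q : Matrix n n 𝕜 := (hH.eigenvectorUnitary : Matrix n n 𝕜)
  have hQ : Q ∈ unitaryGroup n 𝕜 := hH.eigenvectorUnitary.2
  have hQQ : Qᴴ * Q = 1 := mem_unitaryGroup_iff'.mp hQ
  have hdiag : (Qᴴ * (Aᴴ * A) * Q).IsDiag := by
    have := hH.conjStarAlgAut_star_eigenvectorUnitary
    rw [Unitary.conjStarAlgAut_star_apply] at this
    rw [← star_eq_conjTranspose, this]
    exact isDiag_diagonal _
  have hAQ : (A * Q)ᴴ * (A * Q) = Qᴴ * (Aᴴ * A) * Q := by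
    simp only [conjTranspose_mul, Matrix.mul_assoc]
  have hCQ : (C * Q)ᴴ * (C * Q) = 1 - Qᴴ * (Aᴴ * A) * Q :=
    calc (C * Q)ᴴ * (C * Q) = Qᴴ * (Cᴴ * C) * Q := by simp only [conjTranspose_mul, Matrix.mul_assoc]
      _ = 1 - Qᴴ * (Aᴴ * A) * Q := by
        rw [eq_sub_of_add_eq' h, Matrix.mul_sub, Matrix.sub_mul, Matrix.mul_one, hQQ]
  obtain ⟨P₀, hP₀, s, hs, hAs⟩ := exists_mem_unitaryGroup_eq_mul_diagonal_of_isDiag (hAQ ▸ hdiag)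
  obtain ⟨P₁, hP₁, t, ht, hCt⟩ :=
    exists_mem_unitaryGroup_eq_mul_diagonal_of_isDiag (hCQ ▸ isDiag_one.sub hdiag)
  refine ⟨P₀, hP₀, P₁, hP₁, Q, hQ, s, t, fun k => ?_, ?_, ?_⟩
  · have hk : ((A * Q)ᴴ * (A * Q)) k k + ((C * Q)ᴴ * (C * Q)) k k = 1 := by
      rw [hAQ, hCQ, sub_apply, one_apply_eq, add_sub_cancel]
    rw [← hs, ← ht] at hk
    exact_mod_cast hk
  · rw [← hAs, Matrix.mul_assoc, ← star_eq_conjTranspose, mem_unitaryGroup_iff.mp hQ,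
      Matrix.mul_one]
  · rw [← hCt, Matrix.mul_assoc, ← star_eq_conjTranspose, mem_unitaryGroup_iff.mp hQ,
      Matrix.mul_one]

theorem fin_two_rotation_mem_unitary {R : Type*} [Ring R] [StarRing R] {S T : R}
    (hS : IsSelfAdjoint S) (hT : IsSelfAdjoint T) (hST : Commute S T) (h : S * S + T * T = 1) :
    !![S, -T; T, S] ∈ unitary (Matrix (Fin 2) (Fin 2) R) := by
  rw [Unitary.mem_iff, star_fin_two, mul_fin_two, mul_fin_two, one_fin_two, hS.star_eq, star_neg,
    hT.star_eq]
  simp only [mul_neg, neg_mul, neg_neg, hST.eq, neg_add_cancel, add_neg_cancel, h,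
    add_comm (T * T), and_self]

theorem eq_diagonal_of_mem_unitary_of_apply_one_zero
    {B : Matrix (Fin 2) (Fin 2) (Matrix n n 𝕜)} (hB : B ∈ unitary _) (h10 : B 1 0 = 0) :
    B 0 0 ∈ unitaryGroup n 𝕜 ∧ B 1 1 ∈ unitaryGroup n 𝕜 ∧ B = diagonal ![B 0 0, B 1 1] := by
  rw [eta_fin_two B, h10] at hB
  rw [Unitary.mem_iff, star_fin_two, mul_fin_two, mul_fin_two, one_fin_two] at hB
  have h00 : B 0 0 ∈ unitaryGroup n 𝕜 :=
    mem_unitaryGroup_iff'.mpr (by simpa using congrFun₂ hB.1 0 0)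
  have h01 : B 0 1 = 0 := by
    have := congrArg (B 0 0 * ·) (congrFun₂ hB.1 0 1)
    simpa [← Matrix.mul_assoc, mem_unitaryGroup_iff.mp h00] using this
  refine ⟨h00, mem_unitaryGroup_iff.mpr (by simpa [h01] using congrFun₂ hB.2 1 1), ?_⟩
  rw [eta_fin_two B, h01, h10, diagonal_fin_two]
  rfl

def cosSinBlock (s t : n → ℝ) : Matrix (Fin 2) (Fin 2) (Matrix n n 𝕜) :=
  !![diagonal (fun k => (s k : 𝕜)), -diagonal (fun k => (t k : 𝕜));
     diagonal (fun k => (t k : 𝕜)), diagonal (fun k => (s k : 𝕜))]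

/-- Once the first block column is `diag(P₀, P₁) · (S, T)ᵀ · Qᴴ`, the remaining factor
`N = [[S, -T], [T, S]]ᴴ · diag(P₀, P₁)ᴴ · B` is a block upper triangular unitary, hence
block diagonal. -/
theorem exists_cosSin_decomposition {B : Matrix (Fin 2) (Fin 2) (Matrix n n 𝕜)}
    (hB : B ∈ unitary _) :
    ∃ P₀ ∈ unitaryGroup n 𝕜, ∃ P₁ ∈ unitaryGroup n 𝕜, ∃ Q₀ ∈ unitaryGroup n 𝕜,
      ∃ Q₁ ∈ unitaryGroup n 𝕜, ∃ s t : n → ℝ, (∀ k, s k ^ 2 + t k ^ 2 = 1) ∧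
      B = diagonal ![P₀, P₁] * cosSinBlock s t * diagonal ![Q₀, Q₁] := by
  have hcol : (B 0 0)ᴴ * B 0 0 + (B 1 0)ᴴ * B 1 0 = 1 := by
    have := Unitary.star_mul_self_of_mem hB
    rw [eta_fin_two B, star_fin_two, mul_fin_two, one_fin_two] at this
    simpa [star_eq_conjTranspose] using congrFun₂ this 0 0
  obtain ⟨P₀, hP₀, P₁, hP₁, Q, -, s, t, hst, hA, hC⟩ :=
    exists_cosSin_of_conjTranspose_mul_self_add_eq_one hcol
  have hsa (r : n → ℝ) : IsSelfAdjoint (diagonal fun k => (r k : 𝕜)) := by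
    rw [IsSelfAdjoint, star_eq_conjTranspose, diagonal_conjTranspose]
    simp
  have hST : Commute (diagonal fun k => (s k : 𝕜)) (diagonal fun k => (t k : 𝕜)) :=
    commute_diagonal _ _
  set D : Matrix (Fin 2) (Fin 2) (Matrix n n 𝕜) := diagonal ![P₀, P₁]
  set R : Matrix (Fin 2) (Fin 2) (Matrix n n 𝕜) := cosSinBlock s t
  have hD : D ∈ unitary _ := diagonal_mem_unitary (Fin.forall_fin_two.mpr ⟨hP₀, hP₁⟩)
  have hR : R ∈ unitary _ := by
    refine fin_two_rotation_mem_unitary (hsa s) (hsa t) hST ?_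
    rw [diagonal_mul_diagonal, diagonal_mul_diagonal, diagonal_add, ← diagonal_one]
    exact congrArg diagonal (funext fun k => by rw [← sq, ← sq]; exact_mod_cast hst k)
  have hN10 : (star R * star D * B) 1 0 = 0 := by
    rw [Matrix.mul_assoc, eta_fin_two B]
    simp only [R, D, cosSinBlock, diagonal_fin_two, star_fin_two, mul_fin_two]
    simp only [of_apply, cons_val', cons_val_zero, cons_val_one, empty_val', cons_val_fin_one,
      star_zero, star_neg, (hsa s).star_eq, (hsa t).star_eq, zero_mul, zero_add, add_zero, hA, hC,
      ← Matrix.mul_assoc, Unitary.star_mul_self_of_mem hP₀, Unitary.star_mul_self_of_mem hP₁,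
      Matrix.one_mul, hST.eq, neg_mul, neg_add_cancel]
  obtain ⟨hN0, hN1, hN⟩ :=
    eq_diagonal_of_mem_unitary_of_apply_one_zero
      (mul_mem (mul_mem (Unitary.star_mem hR) (Unitary.star_mem hD)) hB) hN10
  have hB' : B = D * R * (star R * star D * B) := by
    simp only [← Matrix.mul_assoc, Matrix.mul_assoc D R, Unitary.mul_star_self_of_mem hR,
      Unitary.mul_star_self_of_mem hD, Matrix.one_mul]
  rw [hN] at hB'
  exact ⟨P₀, hP₀, P₁, hP₁, _, hN0, _, hN1, s, t, hst, hB'⟩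

end Matrix

theorem kronecker_mul_mul_kronecker_mem_Uc {a b c d : M2} (ha : IsUnitary2 a) (hb : IsUnitary2 b)
    (hc : IsUnitary2 c) (hd : IsUnitary2 d) {M : M4} (hM : M ∈ Uc) :
    (a ⊗ₖ b) * M * (c ⊗ₖ d) ∈ Uc := by
  obtain ⟨a', b', c', d', w, ha', hb', hc', hd', hw, rfl⟩ := hM
  refine ⟨a * a', b * b', c' * c, d' * d, w, mul_mem ha ha', mul_mem hb hb', mul_mem hc' hc,
    mul_mem hd' hd, hw, ?_⟩
  simp only [Matrix.mul_assoc, mul_kronecker_mul]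

theorem E00_kronecker_add_E11_kronecker_mem_Uc {X Y : M2} (hX : IsUnitary2 X)
    (hY : IsUnitary2 Y) : E00 ⊗ₖ X + E11 ⊗ₖ Y ∈ Uc := by
  refine ⟨1, X, 1, 1, Xᴴ * Y, one_mem _, hX, one_mem _, one_mem _,
    mul_mem (Unitary.star_mem hX) hY, ?_⟩
  rw [one_kronecker_one, Matrix.mul_one, Matrix.mul_add, ← mul_kronecker_mul, ← mul_kronecker_mul,
    ← Matrix.mul_assoc, ← star_eq_conjTranspose, Unitary.mul_star_self_of_mem hX]
  simp only [Matrix.one_mul, Matrix.mul_one]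

theorem comp_diagonal_fin_two {n : Type*} [DecidableEq n] (X Y : Matrix n n ℂ) :
    comp _ _ _ _ _ (diagonal ![X, Y]) = E00 ⊗ₖ X + E11 ⊗ₖ Y := by
  ext ⟨i, k⟩ ⟨j, l⟩
  fin_cases i <;> fin_cases j <;> simp [E00, E11]

theorem ofReal_add_mul_I_mem_unitary {x y : ℝ} (h : x ^ 2 + y ^ 2 = 1) :
    (x + y * I : ℂ) ∈ unitary ℂ := by
  rw [Unitary.mem_iff_star_mul_self, star_def, ← Complex.normSq_eq_conj_mul_self,
    Complex.normSq_add_mul_I, h, ofReal_one]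

/-- Its columns `(1, -i)/√2` and `(1, i)/√2` are eigenvectors of every rotation `[[c, -d], [d, c]]`,
with eigenvalues `c + id` and `c - id`. -/
def rotationEigenbasis : M2 := ((Real.sqrt 2)⁻¹ : ℂ) • !![1, 1; -I, I]

theorem inv_sqrt_two_sq : ((Real.sqrt 2 : ℂ))⁻¹ ^ 2 = 1 / 2 := by
  rw [inv_pow, ← Complex.ofReal_pow, Real.sq_sqrt (by norm_num)]
  norm_num

theorem isUnitary2_rotationEigenbasis : IsUnitary2 rotationEigenbasis := by
  rw [IsUnitary2, mem_unitaryGroup_iff]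
  ext i j
  fin_cases i <;> fin_cases j <;> simp [rotationEigenbasis, mul_apply, Fin.sum_univ_two] <;>
    grind [inv_sqrt_two_sq, I_sq]

theorem comp_cosSinBlock_eq {n : Type*} [Fintype n] [DecidableEq n] (s t : n → ℝ) :
    comp _ _ _ _ _ (cosSinBlock (𝕜 := ℂ) s t) =
      (rotationEigenbasis ⊗ₖ 1) *
        (E00 ⊗ₖ diagonal (fun k => s k + t k * I) + E11 ⊗ₖ diagonal (fun k => s k - t k * I)) *
        (rotationEigenbasisᴴ ⊗ₖ 1) := by
  have hE00 : rotationEigenbasis * E00 * rotationEigenbasisᴴ = !![1 / 2, I / 2; -I / 2, 1 / 2] := by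
    ext i j
    fin_cases i <;> fin_cases j <;> simp [rotationEigenbasis, E00, mul_apply, Fin.sum_univ_two] <;>
      grind [inv_sqrt_two_sq, I_sq]
  have hE11 : rotationEigenbasis * E11 * rotationEigenbasisᴴ = !![1 / 2, -I / 2; I / 2, 1 / 2] := by
    ext i j
    fin_cases i <;> fin_cases j <;> simp [rotationEigenbasis, E11, mul_apply, Fin.sum_univ_two] <;>
      grind [inv_sqrt_two_sq, I_sq]
  rw [Matrix.mul_add, Matrix.add_mul, ← mul_kronecker_mul, ← mul_kronecker_mul,
    ← mul_kronecker_mul, ← mul_kronecker_mul, Matrix.one_mul, Matrix.mul_one, Matrix.one_mul,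
    Matrix.mul_one, hE00, hE11]
  ext ⟨i, k⟩ ⟨j, l⟩
  fin_cases i <;> fin_cases j <;> simp [cosSinBlock, diagonal_apply] <;> grind [I_sq]

theorem comp_cosSinBlock_mem_Uc {s t : Fin 2 → ℝ} (h : ∀ k, s k ^ 2 + t k ^ 2 = 1) :
    comp _ _ _ _ _ (cosSinBlock (𝕜 := ℂ) s t) ∈ Uc := by
  have hz (k : Fin 2) : (s k + t k * I : ℂ) ∈ unitary ℂ := ofReal_add_mul_I_mem_unitary (h k)
  have hz' (k : Fin 2) : (s k - t k * I : ℂ) ∈ unitary ℂ := by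
    convert Unitary.star_mem (hz k) using 1
    simp [sub_eq_add_neg]
  rw [comp_cosSinBlock_eq]
  exact kronecker_mul_mul_kronecker_mem_Uc isUnitary2_rotationEigenbasis (one_mem _)
    (Unitary.star_mem isUnitary2_rotationEigenbasis) (one_mem _)
    (E00_kronecker_add_E11_kronecker_mem_Uc (diagonal_mem_unitary hz) (diagonal_mem_unitary hz'))

/-- every two-qubit unitary is a product of three controlled-unitaries up to
local unitaries. -/
theorem stmt6 (W : M4) (hW : IsUnitary4 W) :
    ∃ U V X : M4, U ∈ Uc ∧ V ∈ Uc ∧ X ∈ Uc ∧ W = U * V * X := by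
  obtain ⟨P₀, hP₀, P₁, hP₁, Q₀, hQ₀, Q₁, hQ₁, s, t, hst, hB⟩ :=
    exists_cosSin_decomposition (comp_symm_mem_unitary hW)
  refine ⟨_, _, _, E00_kronecker_add_E11_kronecker_mem_Uc hP₀ hP₁, comp_cosSinBlock_mem_Uc hst,
    E00_kronecker_add_E11_kronecker_mem_Uc hQ₀ hQ₁, ?_⟩
  rw [← comp_diagonal_fin_two, ← comp_diagonal_fin_two, ← compRingEquiv_apply, ← compRingEquiv_apply,
    ← compRingEquiv_apply, ← map_mul, ← map_mul, ← hB, compRingEquiv_apply, Equiv.apply_symm_apply]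

end
end

section
/- Suppose αx, αy, αz ∈ ℝ satisfy sin(2αx) ≠ 0, sin(2αy) ≠ 0 and sin(2αz) ≠ 0, and let U₀ = exp(i(αx·X⊗X + αy·Y⊗Y + αz·Z⊗Z)). Then for every a, b ∈ ℂ with |a|² + |b|² = 1 and φ = (a,b)·(a,b)† the associated rank-one projector, the map ρ ↦ Tr_B[U₀ · (ρ ⊗ φ) · U₀†] is not unital: Tr_B[U₀ · (I₂ ⊗ φ) · U₀†] ≠ I₂. -/
/-!
The three terms of the generator commute and each squares to `1`, so
`U₀ = ∏ (cos α + i sin α · σ ⊗ σ)`. Such a `U₀` preserves `span{|00⟩, |11⟩}` and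
`span{|01⟩, |10⟩}`, and a direct computation of the partial trace gives, for every `φ`,
`Tr_B[U₀ (1 ⊗ φ) U₀†] = tr φ · 1 + Σ sin 2αⱼ sin 2αₖ tr(φ σᵢ) σᵢ` with `{i, j, k} = {x, y, z}`.
If this equals `1 = tr φ · 1`, then all `tr(φ σᵢ)` vanish, so `φ = 1/2`, which is not a projector.
-/

open Matrix Kronecker Complex

noncomputable section

theorem NormedSpace.exp_mul_I_smul_of_mul_self_eq_one {𝔸 : Type*} [NormedRing 𝔸] [NormedAlgebra ℂ 𝔸]
    [CompleteSpace 𝔸] {A : 𝔸} (hA : A * A = 1) (θ : ℂ) :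
    NormedSpace.exp ((θ * I) • A) = Complex.cos θ • (1 : 𝔸) + (Complex.sin θ * I) • A := by
  have hpow (n : ℕ) : A ^ (2 * n) = 1 := by rw [pow_mul, sq, hA, one_pow]
  rw [NormedSpace.exp_eq_tsum ℂ]
  refine HasSum.tsum_eq (HasSum.even_add_odd ?_ ?_)
  · convert (Complex.hasSum_cos' θ).smul_const (1 : 𝔸) using 2 with n
    rw [smul_pow, hpow, smul_smul, div_eq_inv_mul]
  · convert ((Complex.hasSum_sin' θ).mul_right I).smul_const A using 2 with n
    rw [smul_pow, pow_succ A, hpow, one_mul, smul_smul, div_mul_cancel₀ _ I_ne_zero,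
      div_eq_inv_mul]

-- `NormedSpace.exp` does not depend on the norm, so any matrix norm will do here.
open scoped Norms.Operator in
theorem Matrix.exp_mul_I_smul_of_mul_self_eq_one {m : Type*} [Fintype m] [DecidableEq m]
    {A : Matrix m m ℂ} (hA : A * A = 1) (θ : ℂ) :
    NormedSpace.exp ((θ * I) • A) = Complex.cos θ • (1 : Matrix m m ℂ) + (Complex.sin θ * I) • A :=
  NormedSpace.exp_mul_I_smul_of_mul_self_eq_one hA θ

section Kronecker

variable {R n : Type*} [CommRing R] [Fintype n]

theorem Matrix.kronecker_self_mul_self [DecidableEq n] {P : Matrix n n R} (hP : P * P = 1) :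
    (P ⊗ₖ P) * (P ⊗ₖ P) = 1 := by
  rw [← mul_kronecker_mul, hP, one_kronecker_one]

theorem Matrix.commute_kronecker_self_of_anticommute {P Q : Matrix n n R}
    (h : P * Q = -(Q * P)) : Commute (P ⊗ₖ P) (Q ⊗ₖ Q) := by
  rw [Commute, SemiconjBy, ← mul_kronecker_mul, ← mul_kronecker_mul, h, ← neg_one_smul R (Q * P),
    smul_kronecker, kronecker_smul, smul_smul]
  norm_num

end Kronecker

theorem Real.cos_sub_sq_add_sin_add_sq (x y : ℝ) :
    Real.cos (x - y) ^ 2 + Real.sin (x + y) ^ 2 = 1 + Real.sin (2 * x) * Real.sin (2 * y) := by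
  rw [Real.cos_sub, Real.sin_add, Real.sin_two_mul, Real.sin_two_mul]
  linear_combination (Real.sin y ^ 2 + Real.cos y ^ 2) * Real.sin_sq_add_cos_sq x +
    Real.sin_sq_add_cos_sq y

theorem Real.sin_sub_sq_add_cos_add_sq (x y : ℝ) :
    Real.sin (x - y) ^ 2 + Real.cos (x + y) ^ 2 = 1 - Real.sin (2 * x) * Real.sin (2 * y) := by
  rw [Real.sin_sub, Real.cos_add, Real.sin_two_mul, Real.sin_two_mul]
  linear_combination (Real.sin y ^ 2 + Real.cos y ^ 2) * Real.sin_sq_add_cos_sq x +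
    Real.sin_sq_add_cos_sq y

theorem Real.two_mul_sin_add_mul_cos_sub (x y : ℝ) :
    2 * Real.sin (x + y) * Real.cos (x - y) = Real.sin (2 * x) + Real.sin (2 * y) := by
  rw [Real.two_mul_sin_mul_cos, add_comm]
  ring_nf

theorem Real.two_mul_sin_sub_mul_cos_add (x y : ℝ) :
    2 * Real.sin (x - y) * Real.cos (x + y) = Real.sin (2 * x) - Real.sin (2 * y) := by
  rw [Real.two_mul_sin_mul_cos, show x - y - (x + y) = -(2 * y) by ring, Real.sin_neg]
  ring_nf

theorem Complex.exp_mul_I_sq_sub_exp_neg_mul_I_sq (θ : ℂ) :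
    exp (θ * I) ^ 2 - exp (-θ * I) ^ 2 = 2 * I * sin (2 * θ) := by
  rw [← exp_nat_mul, ← exp_nat_mul, show ((2 : ℕ) : ℂ) * (θ * I) = (2 * θ) * I by push_cast; ring,
    show ((2 : ℕ) : ℂ) * (-θ * I) = -(2 * θ) * I by push_cast; ring, exp_mul_I, exp_mul_I,
    cos_neg, sin_neg]
  ring

theorem PX_mul_self : PX * PX = 1 := by
  ext i j; fin_cases i <;> fin_cases j <;> simp [PX]

theorem PY_mul_self : PY * PY = 1 := by
  ext i j; fin_cases i <;> fin_cases j <;> simp [PY]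

theorem PZ_mul_self : PZ * PZ = 1 := by
  ext i j; fin_cases i <;> fin_cases j <;> simp [PZ]

theorem PX_mul_PY : PX * PY = -(PY * PX) := by
  ext i j; fin_cases i <;> fin_cases j <;> simp [PX, PY]

theorem PX_mul_PZ : PX * PZ = -(PZ * PX) := by
  ext i j; fin_cases i <;> fin_cases j <;> simp [PX, PZ]

theorem PY_mul_PZ : PY * PZ = -(PZ * PY) := by
  ext i j; fin_cases i <;> fin_cases j <;> simp [PY, PZ]

theorem KCcore_eq_mul (ax ay az : ℝ) : KCcore ax ay az =
    (Complex.cos ax • 1 + (Complex.sin ax * I) • (PX ⊗ₖ PX)) *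
      (Complex.cos ay • 1 + (Complex.sin ay * I) • (PY ⊗ₖ PY)) *
      (Complex.cos az • 1 + (Complex.sin az * I) • (PZ ⊗ₖ PZ)) := by
  have hXY := commute_kronecker_self_of_anticommute PX_mul_PY
  have hXZ := commute_kronecker_self_of_anticommute PX_mul_PZ
  have hYZ := commute_kronecker_self_of_anticommute PY_mul_PZ
  rw [KCcore, smul_add, smul_add, smul_smul, smul_smul, smul_smul, mul_comm I, mul_comm I,
    mul_comm I, Matrix.exp_add_of_commute _ _ (((hXZ.smul_left _).smul_right _).add_left
      ((hYZ.smul_left _).smul_right _)),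
    Matrix.exp_add_of_commute _ _ ((hXY.smul_left _).smul_right _),
    Matrix.exp_mul_I_smul_of_mul_self_eq_one (kronecker_self_mul_self PX_mul_self),
    Matrix.exp_mul_I_smul_of_mul_self_eq_one (kronecker_self_mul_self PY_mul_self),
    Matrix.exp_mul_I_smul_of_mul_self_eq_one (kronecker_self_mul_self PZ_mul_self)]

/-- The two-qubit operator acting as `[[p, q], [q, p]]` on `span{|00⟩, |11⟩}` and as
`[[r, t], [t, r]]` on `span{|01⟩, |10⟩}`. -/
def bellBlock (p q r t : ℂ) : M4 := Matrix.of fun x y =>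
  if x = y then (if x.1 = x.2 then p else r)
  else if x.1 ≠ y.1 ∧ x.2 ≠ y.2 then (if x.1 = x.2 then q else t) else 0

theorem ptraceB_bellBlock_conj (p q r t : ℂ) (φ : M2) :
    ptraceB (bellBlock p q r t * (1 ⊗ₖ φ) * (bellBlock p q r t)ᴴ) =
      !![(p * star p + t * star t) * φ 0 0 + (q * star q + r * star r) * φ 1 1,
        (p * star t + t * star p) * φ 0 1 + (q * star r + r * star q) * φ 1 0;
        (q * star r + r * star q) * φ 0 1 + (p * star t + t * star p) * φ 1 0,
        (q * star q + r * star r) * φ 0 0 + (p * star p + t * star t) * φ 1 1] := by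
  ext i j
  fin_cases i <;> fin_cases j <;>
    simp [ptraceB, bellBlock, Matrix.mul_apply, Fintype.sum_prod_type, Matrix.one_apply] <;> ring

theorem ptraceB_bellBlock_phase_conj (θ c₁ s₁ c₂ s₂ : ℝ) (φ : M2) :
    let U := bellBlock (Complex.exp (θ * I) * c₁) (I * Complex.exp (θ * I) * s₁)
      (Complex.exp (-θ * I) * c₂) (I * Complex.exp (-θ * I) * s₂)
    ptraceB (U * (1 ⊗ₖ φ) * Uᴴ) =
      !![((c₁ ^ 2 + s₂ ^ 2 : ℝ) : ℂ) * φ 0 0 + ((s₁ ^ 2 + c₂ ^ 2 : ℝ) : ℂ) * φ 1 1,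
        ((2 * s₂ * c₁ * Real.sin (2 * θ) : ℝ) : ℂ) * φ 0 1 +
          ((-(2 * s₁ * c₂) * Real.sin (2 * θ) : ℝ) : ℂ) * φ 1 0;
        ((-(2 * s₁ * c₂) * Real.sin (2 * θ) : ℝ) : ℂ) * φ 0 1 +
          ((2 * s₂ * c₁ * Real.sin (2 * θ) : ℝ) : ℂ) * φ 1 0,
        ((s₁ ^ 2 + c₂ ^ 2 : ℝ) : ℂ) * φ 0 0 + ((c₁ ^ 2 + s₂ ^ 2 : ℝ) : ℂ) * φ 1 1] := by
  intro U
  rw [ptraceB_bellBlock_conj]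
  have hsq := Complex.exp_mul_I_sq_sub_exp_neg_mul_I_sq θ
  set u := Complex.exp (θ * I)
  set v := Complex.exp (-θ * I)
  have hu : star u = v := by
    rw [Complex.star_def, ← Complex.exp_conj]; simp [v]
  have hv : star v = u := by rw [← hu, star_star]
  have huv : u * v = 1 := by rw [← Complex.exp_add]; simp
  have hreal (x : ℝ) : star (x : ℂ) = x := Complex.conj_ofReal x
  have hI : star I = -I := Complex.conj_I
  simp only [star_mul', hu, hv, hreal, hI]
  have hα : u * c₁ * (v * c₁) + I * v * s₂ * (-I * u * s₂) = ((c₁ ^ 2 + s₂ ^ 2 : ℝ) : ℂ) := by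
    push_cast
    linear_combination (c₁ ^ 2 - I ^ 2 * s₂ ^ 2 : ℂ) * huv - (s₂ ^ 2 : ℂ) * I_sq
  have hβ : I * u * s₁ * (-I * v * s₁) + v * c₂ * (u * c₂) = ((s₁ ^ 2 + c₂ ^ 2 : ℝ) : ℂ) := by
    push_cast
    linear_combination (c₂ ^ 2 - I ^ 2 * s₁ ^ 2 : ℂ) * huv - (s₁ ^ 2 : ℂ) * I_sq
  have hγ : u * c₁ * (-I * u * s₂) + I * v * s₂ * (v * c₁) =
      ((2 * s₂ * c₁ * Real.sin (2 * θ) : ℝ) : ℂ) := by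
    push_cast
    linear_combination (-I * c₁ * s₂) * hsq - 2 * c₁ * s₂ * Complex.sin (2 * θ) * I_sq
  have hδ : I * u * s₁ * (u * c₂) + v * c₂ * (-I * v * s₁) =
      ((-(2 * s₁ * c₂) * Real.sin (2 * θ) : ℝ) : ℂ) := by
    push_cast
    linear_combination (I * s₁ * c₂) * hsq + 2 * s₁ * c₂ * Complex.sin (2 * θ) * I_sq
  rw [hα, hβ, hγ, hδ]

theorem KCcore_eq_bellBlock (ax ay az : ℝ) : KCcore ax ay az =
    bellBlock (Complex.exp (az * I) * Real.cos (ax - ay))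
      (I * Complex.exp (az * I) * Real.sin (ax - ay))
      (Complex.exp (-az * I) * Real.cos (ax + ay))
      (I * Complex.exp (-az * I) * Real.sin (ax + ay)) := by
  rw [KCcore_eq_mul]
  push_cast
  simp only [Complex.exp_mul_I, Complex.cos_add, Complex.cos_sub, Complex.sin_add, Complex.sin_sub,
    Complex.cos_neg, Complex.sin_neg]
  ext ⟨i, k⟩ ⟨j, l⟩
  fin_cases i <;> fin_cases k <;> fin_cases j <;> fin_cases l <;>
    simp [bellBlock, PX, PY, PZ, Matrix.mul_apply, Fintype.sum_prod_type, Matrix.one_apply] <;>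
    ring_nf <;> simp only [I_sq, I_pow_three] <;> ring

theorem ptraceB_KCcore_conj_eq (ax ay az : ℝ) (φ : M2) :
    ptraceB (KCcore ax ay az * (1 ⊗ₖ φ) * (KCcore ax ay az)ᴴ) =
      !![((1 + Real.sin (2 * ax) * Real.sin (2 * ay) : ℝ) : ℂ) * φ 0 0 +
          ((1 - Real.sin (2 * ax) * Real.sin (2 * ay) : ℝ) : ℂ) * φ 1 1,
        (((Real.sin (2 * ax) + Real.sin (2 * ay)) * Real.sin (2 * az) : ℝ) : ℂ) * φ 0 1 +
          ((-(Real.sin (2 * ax) - Real.sin (2 * ay)) * Real.sin (2 * az) : ℝ) : ℂ) * φ 1 0;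
        ((-(Real.sin (2 * ax) - Real.sin (2 * ay)) * Real.sin (2 * az) : ℝ) : ℂ) * φ 0 1 +
          (((Real.sin (2 * ax) + Real.sin (2 * ay)) * Real.sin (2 * az) : ℝ) : ℂ) * φ 1 0,
        ((1 - Real.sin (2 * ax) * Real.sin (2 * ay) : ℝ) : ℂ) * φ 0 0 +
          ((1 + Real.sin (2 * ax) * Real.sin (2 * ay) : ℝ) : ℂ) * φ 1 1] := by
  rw [KCcore_eq_bellBlock, ptraceB_bellBlock_phase_conj, Real.cos_sub_sq_add_sin_add_sq,
    Real.sin_sub_sq_add_cos_add_sq, Real.two_mul_sin_add_mul_cos_sub,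
    Real.two_mul_sin_sub_mul_cos_add]

theorem ptraceB_KCcore_conj_eq_pauli (ax ay az : ℝ) (φ : M2) :
    ptraceB (KCcore ax ay az * (1 ⊗ₖ φ) * (KCcore ax ay az)ᴴ) =
      φ.trace • 1 + (Real.sin (2 * ay) * Real.sin (2 * az) * (φ * PX).trace : ℂ) • PX +
        (Real.sin (2 * ax) * Real.sin (2 * az) * (φ * PY).trace : ℂ) • PY +
        (Real.sin (2 * ax) * Real.sin (2 * ay) * (φ * PZ).trace : ℂ) • PZ := by
  rw [ptraceB_KCcore_conj_eq]
  ext i j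
  fin_cases i <;> fin_cases j <;>
    simp [PX, PY, PZ, Matrix.trace, Matrix.mul_apply, Fin.sum_univ_two] <;> ring_nf <;>
    simp only [I_sq] <;> ring

theorem pauli_coeffs_eq_zero_of_eq_one {c₀ c₁ c₂ c₃ : ℂ}
    (h : c₀ • 1 + c₁ • PX + c₂ • PY + c₃ • PZ = (1 : M2)) : c₁ = 0 ∧ c₂ = 0 ∧ c₃ = 0 := by
  have h00 := congrFun (congrFun h 0) 0
  have h01 := congrFun (congrFun h 0) 1
  have h10 := congrFun (congrFun h 1) 0
  have h11 := congrFun (congrFun h 1) 1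
  simp only [PX, PY, PZ, smul_of, smul_cons, smul_eq_mul, mul_zero, mul_one, smul_empty, mul_neg,
    Matrix.add_apply, Matrix.smul_apply, one_apply_eq, of_apply, cons_val', cons_val_zero,
    cons_val_fin_one, cons_val_one, add_zero, zero_add, ne_eq, zero_ne_one, one_ne_zero,
    not_false_eq_true, one_apply_ne] at h00 h01 h10 h11
  refine ⟨?_, ?_, ?_⟩
  · linear_combination (h01 + h10) / 2
  · linear_combination (-I / 2) * (h10 - h01) + c₂ * I_sq
  · linear_combination (h00 - h11) / 2

theorem not_isIdempotentElem_of_trace_mul_pauli_eq_zero {φ : M2} (htr : φ.trace = 1)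
    (hX : (φ * PX).trace = 0) (hY : (φ * PY).trace = 0) (hZ : (φ * PZ).trace = 0) :
    ¬ IsIdempotentElem φ := by
  intro hφ
  have h00 := congrFun (congrFun hφ.eq 0) 0
  simp only [trace, diag_apply, Fin.sum_univ_two, PX, PY, PZ, Matrix.mul_apply, of_apply, cons_val',
    cons_val_fin_one, cons_val_zero, cons_val_one, mul_zero, mul_one, mul_neg, zero_add,
    add_zero] at htr hX hY hZ h00
  have h01 : φ 0 1 = 0 := by
    have h : I * (2 * φ 0 1) = 0 := by linear_combination hY + I * hX
    simpa [I_ne_zero] using h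
  have hdiag : φ 0 0 = 1 / 2 := by linear_combination (htr + hZ) / 2
  rw [h01, hdiag] at h00
  norm_num at h00

def pureState (a b : ℂ) : M2 := !![a * star a, a * star b; b * star a, b * star b]

theorem pureState_mul_self (a b : ℂ) :
    pureState a b * pureState a b = (pureState a b).trace • pureState a b := by
  ext i j
  fin_cases i <;> fin_cases j <;> simp [pureState, Matrix.mul_apply, Matrix.trace] <;> ring

theorem trace_pureState (a b : ℂ) : (pureState a b).trace = (‖a‖ ^ 2 + ‖b‖ ^ 2 : ℝ) := by
  simp [pureState, Matrix.trace, Complex.mul_conj']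

theorem isIdempotentElem_pureState {a b : ℂ} (hab : ‖a‖ ^ 2 + ‖b‖ ^ 2 = 1) :
    IsIdempotentElem (pureState a b) := by
  rw [IsIdempotentElem, pureState_mul_self, trace_pureState, hab, Complex.ofReal_one, one_smul]

/-- when all three KC coefficients have nonzero `sin(2α)`, the induced map
on A is not unital, for every pure input state on B. -/
theorem stmt10 (ax ay az : ℝ) (hx : Real.sin (2 * ax) ≠ 0) (hy : Real.sin (2 * ay) ≠ 0)
    (hz : Real.sin (2 * az) ≠ 0) (a b : ℂ)
    (hab : ‖a‖ ^ 2 + ‖b‖ ^ 2 = 1) :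
    ptraceB (KCcore ax ay az *
        ((1 : M2) ⊗ₖ !![a * star a, a * star b; b * star a, b * star b]) *
        (KCcore ax ay az)ᴴ) ≠ (1 : M2) := by
  have htr : (pureState a b).trace = 1 := by rw [trace_pureState, hab, Complex.ofReal_one]
  intro h
  rw [← pureState, ptraceB_KCcore_conj_eq_pauli, htr] at h
  obtain ⟨hX, hY, hZ⟩ := pauli_coeffs_eq_zero_of_eq_one h
  refine not_isIdempotentElem_of_trace_mul_pauli_eq_zero htr ?_ ?_ ?_
    (isIdempotentElem_pureState hab)
  · exact (mul_eq_zero.mp hX).resolve_left (mul_ne_zero (mod_cast hy) (mod_cast hz))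
  · exact (mul_eq_zero.mp hY).resolve_left (mul_ne_zero (mod_cast hx) (mod_cast hz))
  · exact (mul_eq_zero.mp hZ).resolve_left (mul_ne_zero (mod_cast hx) (mod_cast hy))

end
end

section
/- Let θ₁, θ₂, φ₁, φ₂ ∈ ℝ, and let W = C_p(θ₁)·(R_y(φ₁) ⊗ R_y(φ₂))·C_p(θ₂), where C_p(θ) = diag(1,1,1,e^{iθ}) is the controlled-phase gate and R_y(φ) = exp(−i·(φ/2)·Y). Then Tr_B[W · (I₂ ⊗ E₀₀) · W†] = I₂, where E₀₀ = !![1,0;0,0]; i.e., the channel ρ ↦ Tr_B[W (ρ ⊗ E₀₀) W†] is unital. -/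
open Matrix Kronecker Complex

noncomputable section

/-!
Both controlled-phase gates are diagonal unitaries. The inner one commutes with the diagonal
`1 ⊗ E₀₀` and cancels; the local gate `u ⊗ v` turns `1 ⊗ E₀₀` into `1 ⊗ σ` with `σ = v E₀₀ v†`
of trace one. Conjugation by a diagonal unitary multiplies each entry of `1 ⊗ σ` by a phase and
the diagonal ones by `|phase|² = 1`; the blocks off the diagonal of the first qubit stay zero, so
the partial trace is `Tr σ • 1 = 1`.
-/

lemma exp_mem_unitaryGroup_of_conjTranspose_eq_neg {m : Type*} [Fintype m] [DecidableEq m]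
    {A : Matrix m m ℂ} (hA : Aᴴ = -A) : NormedSpace.exp A ∈ unitaryGroup m ℂ := by
  rw [mem_unitaryGroup_iff, star_eq_conjTranspose, ← exp_conjTranspose, hA, Matrix.exp_neg]
  exact mul_nonsing_inv _ ((isUnit_exp A).map detMonoidHom)

lemma exp_smul_PY_mem_unitaryGroup (φ : ℝ) :
    NormedSpace.exp ((-(Complex.I * ((φ : ℂ) / 2))) • PY) ∈ unitaryGroup (Fin 2) ℂ := by
  apply exp_mem_unitaryGroup_of_conjTranspose_eq_neg
  rw [conjTranspose_smul, isHermitian_PY.eq, ← neg_smul]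
  congr 1
  simp [Complex.conj_ofReal]

lemma kronecker_conj_one_kronecker {u v : M2} (hu : u ∈ unitaryGroup (Fin 2) ℂ) (σ : M2) :
    (u ⊗ₖ v) * ((1 : M2) ⊗ₖ σ) * (u ⊗ₖ v)ᴴ = (1 : M2) ⊗ₖ (v * σ * vᴴ) := by
  rw [conjTranspose_kronecker, ← mul_kronecker_mul, ← mul_kronecker_mul, Matrix.mul_one,
    ← star_eq_conjTranspose, Unitary.mul_star_self_of_mem hu]

lemma trace_unitary_conj {v : M2} (hv : v ∈ unitaryGroup (Fin 2) ℂ) (σ : M2) :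
    (v * σ * vᴴ).trace = σ.trace := by
  rw [trace_mul_cycle, ← star_eq_conjTranspose, Unitary.star_mul_self_of_mem hv, Matrix.one_mul]

lemma ptraceB_diagonal_conj_one_kronecker {d : Fin 2 × Fin 2 → ℂ}
    (hd : ∀ p, d p * star (d p) = 1) (σ : M2) :
    ptraceB (diagonal d * ((1 : M2) ⊗ₖ σ) * (diagonal d)ᴴ) = σ.trace • (1 : M2) := by
  ext i j
  simp only [ptraceB, diagonal_conjTranspose, diagonal_mul, mul_diagonal, of_apply,
    kroneckerMap_apply, Matrix.smul_apply, one_apply, trace, diag, Fin.sum_univ_two, Pi.star_apply]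
  split_ifs with h
  · subst h
    linear_combination σ 0 0 * hd (i, 0) + σ 1 1 * hd (i, 1)
  · simp

lemma ptraceB_Cp_conj_one_kronecker (θ : ℝ) (σ : M2) :
    ptraceB (Cp θ * ((1 : M2) ⊗ₖ σ) * (Cp θ)ᴴ) = σ.trace • (1 : M2) := by
  refine ptraceB_diagonal_conj_one_kronecker (fun p => ?_) σ
  split_ifs
  · rw [Complex.star_def, ← Complex.exp_conj, ← Complex.exp_add]
    simp [Complex.conj_ofReal]
  · simp

lemma Cp_mul_one_kronecker_E00 (θ : ℝ) : Cp θ * ((1 : M2) ⊗ₖ E00) = (1 : M2) ⊗ₖ E00 := by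
  ext ⟨i, k⟩ ⟨j, l⟩
  fin_cases i <;> fin_cases k <;> fin_cases l <;> simp [Cp, E00, diagonal_mul]

lemma ptraceB_Cp_kronecker_Cp_conj_one_kronecker_E00 {u v : M2}
    (hu : u ∈ unitaryGroup (Fin 2) ℂ) (hv : v ∈ unitaryGroup (Fin 2) ℂ) (θ₁ θ₂ : ℝ) :
    ptraceB (Cp θ₁ * (u ⊗ₖ v) * Cp θ₂ * ((1 : M2) ⊗ₖ E00) *
      (Cp θ₁ * (u ⊗ₖ v) * Cp θ₂)ᴴ) = 1 := by
  have hE : ((1 : M2) ⊗ₖ E00)ᴴ = (1 : M2) ⊗ₖ E00 := by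
    rw [conjTranspose_kronecker, conjTranspose_one]
    congr 1
    ext i j; fin_cases i <;> fin_cases j <;> simp [E00]
  have hCp : Cp θ₂ * ((1 : M2) ⊗ₖ E00) * (Cp θ₂)ᴴ = (1 : M2) ⊗ₖ E00 := by
    rw [Cp_mul_one_kronecker_E00, ← hE, ← conjTranspose_mul, hE, Cp_mul_one_kronecker_E00, hE]
  calc _ = ptraceB (Cp θ₁ * ((u ⊗ₖ v) * (Cp θ₂ * ((1 : M2) ⊗ₖ E00) * (Cp θ₂)ᴴ) *
          (u ⊗ₖ v)ᴴ) * (Cp θ₁)ᴴ) := by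
        simp only [conjTranspose_mul, Matrix.mul_assoc]
    _ = ptraceB (Cp θ₁ * ((1 : M2) ⊗ₖ (v * E00 * vᴴ)) * (Cp θ₁)ᴴ) := by
        rw [hCp, kronecker_conj_one_kronecker hu]
    _ = 1 := by
        rw [ptraceB_Cp_conj_one_kronecker, trace_unitary_conj hv]
        simp [E00, trace]

/-- for `W = C_p(θ₁)(R_y(φ₁) ⊗ R_y(φ₂))C_p(θ₂)` and input `|0⟩⟨0|` on B,
the channel `ρ ↦ Tr_B[W (ρ ⊗ |0⟩⟨0|) W†]` is unital. -/
theorem stmt12 (θ₁ θ₂ φ₁ φ₂ : ℝ) :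
    ptraceB (Cp θ₁ * (NormedSpace.exp ((-(Complex.I * ((φ₁ : ℂ) / 2))) • PY) ⊗ₖ
          NormedSpace.exp ((-(Complex.I * ((φ₂ : ℂ) / 2))) • PY)) * Cp θ₂ *
        ((1 : M2) ⊗ₖ E00) *
        (Cp θ₁ * (NormedSpace.exp ((-(Complex.I * ((φ₁ : ℂ) / 2))) • PY) ⊗ₖ
          NormedSpace.exp ((-(Complex.I * ((φ₂ : ℂ) / 2))) • PY)) * Cp θ₂)ᴴ) = (1 : M2) :=
  ptraceB_Cp_kronecker_Cp_conj_one_kronecker_E00 (exp_smul_PY_mem_unitaryGroup φ₁)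
    (exp_smul_PY_mem_unitaryGroup φ₂) θ₁ θ₂

end
end

section
/- For all real numbers α and γ, the two-qubit unitary exp(−i(α·X⊗X + γ·Z⊗Z)) can be written as a product of two controlled-unitaries up to local unitaries: there exist U, V ∈ U_c with exp(−i(α·X⊗X + γ·Z⊗Z)) = U·V. -/
open Matrix Kronecker Complex

noncomputable section

/-! `X⊗X` and `Z⊗Z` commute (`X` and `Z` anticommute), so the exponential splits as
`exp(-iα X⊗X) · exp(-iγ Z⊗Z)`. Since `Z⊗Z = diag(1,-1,-1,1)`, the second factor is
`diag(e^{-iγ}, e^{iγ}, e^{iγ}, e^{-iγ})`: the phase `e^{-iγZ}` on the target qubit followed by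
a controlled `e^{2iγZ}`. Conjugating by `H⊗H`, with `HZH = X`, turns the first factor into the
same shape. -/

def phaseZ (t : ℝ) : M2 := diagonal ![Complex.exp (-I * t), Complex.exp (I * t)]

def hadamardGate : M2 := ((Real.sqrt 2 : ℂ))⁻¹ • !![1, 1; 1, -1]

theorem isUnitary2_phaseZ (t : ℝ) : IsUnitary2 (phaseZ t) := by
  rw [IsUnitary2, mem_unitaryGroup_iff]
  ext i j
  fin_cases i <;> fin_cases j <;>
    simp [phaseZ, mul_apply, Fin.sum_univ_two, ← Complex.exp_conj, ← Complex.exp_add]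

theorem hadamardGate_mul_self : hadamardGate * hadamardGate = 1 := by
  ext i j
  fin_cases i <;> fin_cases j <;>
    simp [hadamardGate, mul_apply, Fin.sum_univ_two] <;>
    norm_num [← Complex.ofReal_inv, ← Complex.ofReal_mul, ← Complex.ofReal_add, ← mul_inv]

theorem star_hadamardGate : star hadamardGate = hadamardGate := by
  ext i j
  fin_cases i <;> fin_cases j <;> simp [hadamardGate, ← Complex.ofReal_inv]

theorem isUnitary2_hadamardGate : IsUnitary2 hadamardGate := by
  rw [IsUnitary2, mem_unitaryGroup_iff, star_hadamardGate, hadamardGate_mul_self]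

theorem hadamardGate_mul_PZ_mul_hadamardGate : hadamardGate * PZ * hadamardGate = PX := by
  ext i j
  fin_cases i <;> fin_cases j <;>
    simp [hadamardGate, PZ, PX, mul_apply, Fin.sum_univ_two] <;>
    norm_num [← Complex.ofReal_inv, ← Complex.ofReal_mul, ← Complex.ofReal_add, ← mul_inv]

theorem Matrix.commute_kronecker_self_of_mul_eq_neg {R n : Type*} [Fintype n] [CommRing R]
    {A B : Matrix n n R} (h : A * B = -(B * A)) : Commute (A ⊗ₖ A) (B ⊗ₖ B) := by
  rw [Commute, SemiconjBy, ← mul_kronecker_mul, ← mul_kronecker_mul, h]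
  ext
  simp [kroneckerMap_apply]

theorem Matrix.exp_conj_of_mul_self_eq_one {n : Type*} [Fintype n] [DecidableEq n]
    {u : Matrix n n ℂ} (hu : u * u = 1) (A : Matrix n n ℂ) :
    NormedSpace.exp (u * A * u) = u * NormedSpace.exp A * u :=
  exp_units_conj ⟨u, u, hu, hu⟩ A

theorem local_mul_mem_Uc {a b : M2} (ha : IsUnitary2 a) (hb : IsUnitary2 b) {U : M4}
    (hU : U ∈ Uc) : (a ⊗ₖ b) * U ∈ Uc := by
  obtain ⟨a', b', c, d, w, ha', hb', hc, hd, hw, rfl⟩ := hU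
  refine ⟨a * a', b * b', c, d, w, Submonoid.mul_mem _ ha ha', Submonoid.mul_mem _ hb hb',
    hc, hd, hw, ?_⟩
  rw [mul_kronecker_mul, mul_assoc, mul_assoc, mul_assoc]

theorem mul_local_mem_Uc {c d : M2} (hc : IsUnitary2 c) (hd : IsUnitary2 d) {U : M4}
    (hU : U ∈ Uc) : U * (c ⊗ₖ d) ∈ Uc := by
  obtain ⟨a, b, c', d', w, ha, hb, hc', hd', hw, rfl⟩ := hU
  refine ⟨a, b, c' * c, d' * d, w, ha, hb, Submonoid.mul_mem _ hc' hc,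
    Submonoid.mul_mem _ hd' hd, hw, ?_⟩
  rw [mul_kronecker_mul, mul_assoc]

theorem controlled_mem_Uc {w : M2} (hw : IsUnitary2 w) : E00 ⊗ₖ (1 : M2) + E11 ⊗ₖ w ∈ Uc :=
  ⟨1, 1, 1, 1, w, one_mem _, one_mem _, one_mem _, one_mem _, hw, by
    rw [one_kronecker_one, one_mul, mul_one]⟩

theorem PZ_kronecker_PZ : PZ ⊗ₖ PZ = diagonal fun p => if p.1 = p.2 then 1 else -1 := by
  ext p q
  fin_cases p <;> fin_cases q <;> simp [PZ, kroneckerMap_apply]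

theorem exp_PZ_kronecker_PZ (t : ℝ) :
    NormedSpace.exp ((-I * t) • (PZ ⊗ₖ PZ)) =
      ((1 : M2) ⊗ₖ phaseZ t) * (E00 ⊗ₖ (1 : M2) + E11 ⊗ₖ phaseZ (-(2 * t))) := by
  rw [PZ_kronecker_PZ, ← diagonal_smul, exp_diagonal, Pi.exp_def]
  ext p q
  fin_cases p <;> fin_cases q <;>
    simp [← Complex.exp_eq_exp_ℂ, phaseZ, E00, E11, mul_apply, diagonal_apply,
      one_apply, kroneckerMap_apply, Fintype.sum_prod_type, ← Complex.exp_add] <;>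
    ring_nf

theorem exp_PZ_kronecker_PZ_mem_Uc (t : ℝ) : NormedSpace.exp ((-I * t) • (PZ ⊗ₖ PZ)) ∈ Uc := by
  rw [exp_PZ_kronecker_PZ]
  exact local_mul_mem_Uc (one_mem _) (isUnitary2_phaseZ t)
    (controlled_mem_Uc (isUnitary2_phaseZ _))

theorem exp_PX_kronecker_PX_mem_Uc (t : ℝ) : NormedSpace.exp ((-I * t) • (PX ⊗ₖ PX)) ∈ Uc := by
  have hHH : (hadamardGate ⊗ₖ hadamardGate) * (hadamardGate ⊗ₖ hadamardGate) = 1 := by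
    rw [← mul_kronecker_mul, hadamardGate_mul_self, one_kronecker_one]
  have hconj : (-I * t) • (PX ⊗ₖ PX) = (hadamardGate ⊗ₖ hadamardGate) *
      ((-I * t) • (PZ ⊗ₖ PZ)) * (hadamardGate ⊗ₖ hadamardGate) := by
    rw [Matrix.mul_smul, Matrix.smul_mul, ← mul_kronecker_mul, ← mul_kronecker_mul,
      hadamardGate_mul_PZ_mul_hadamardGate]
  rw [hconj, exp_conj_of_mul_self_eq_one hHH]
  exact mul_local_mem_Uc isUnitary2_hadamardGate isUnitary2_hadamardGate <|
    local_mul_mem_Uc isUnitary2_hadamardGate isUnitary2_hadamardGate <|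
      exp_PZ_kronecker_PZ_mem_Uc t

/-- `exp(−i(α X⊗X + γ Z⊗Z))` is a product of two controlled-unitaries up to
local unitaries. -/
theorem stmt13 (α γ : ℝ) :
    ∃ U V : M4, U ∈ Uc ∧ V ∈ Uc ∧
      NormedSpace.exp ((-Complex.I) •
          ((α : ℂ) • (PX ⊗ₖ PX) + (γ : ℂ) • (PZ ⊗ₖ PZ))) = U * V := by
  refine ⟨_, _, exp_PX_kronecker_PX_mem_Uc α, exp_PZ_kronecker_PZ_mem_Uc γ, ?_⟩
  have hcomm : Commute (PX ⊗ₖ PX) (PZ ⊗ₖ PZ) := commute_kronecker_self_of_mul_eq_neg PX_mul_PZ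
  rw [smul_add, smul_smul, smul_smul, exp_add_of_commute]
  exact (hcomm.smul_left _).smul_right _

end
end
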